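/- For every real μ, the function α ↦ ∫_{-∞}^{∞} (η(μ+z, α) - μ)^2 φ(z) dz is differentiable on (0, ∞), with derivative at α equal to -2[φ(α+μ) + φ(α-μ)] + 2α[Φ(-α-μ) + Φ(-α+μ)]. -/

import Mathlib

open MeasureTheory Filter

/-- Standard normal probability density function. -/
noncomputable def stdNormalPDF (x : ℝ) : ℝ :=
  (Real.sqrt (2 * Real.pi))⁻¹ * Real.exp (-(x ^ 2) / 2)

/-- Standard normal cumulative distribution function. -/
noncomputable def stdNormalCDF (x : ℝ) : ℝ :=
  ∫ t in Set.Iic x, stdNormalPDF t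

/-- Soft-thresholding function `η(x, λ) = sign(x) · max(|x| − λ, 0)`. -/
noncomputable def softThreshold (x lam : ℝ) : ℝ :=
  Real.sign x * max (|x| - lam) 0

/-!
On each of the regions `μ + z ≤ -α`, `|μ + z| ≤ α` and `μ + z > α` the integrand is a quadratic
in `z` times `φ`, and since `φ' = -z φ` the function `(2c - z) φ + (1 + c²) Φ` is an antiderivative
of `(z - c)² φ`. This gives the risk in closed form for every `α ≥ 0`, and the closed form is
differentiated directly, using `φ(-x) = φ(x)` and `Φ(-x) = 1 - Φ(x)`.
-/

open Real Set Topology ProbabilityTheory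

lemma integral_eq_Iic_add_Ioc_add_Ioi {E : Type*} [NormedAddCommGroup E] [NormedSpace ℝ E]
    {μ : Measure ℝ} {f : ℝ → E} {b t : ℝ} (hbt : b ≤ t) (h₁ : IntegrableOn f (Iic b) μ)
    (h₂ : IntegrableOn f (Ioc b t) μ) (h₃ : IntegrableOn f (Ioi t) μ) :
    ∫ z, f z ∂μ = ∫ z in Iic b, f z ∂μ + ∫ z in Ioc b t, f z ∂μ + ∫ z in Ioi t, f z ∂μ := by
  have h₁₂ : IntegrableOn f (Iic t) μ := Iic_union_Ioc_eq_Iic hbt ▸ h₁.union h₂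
  rw [← intervalIntegral.integral_Iic_add_Ioi h₁₂ h₃, ← Iic_union_Ioc_eq_Iic hbt,
    setIntegral_union (Iic_disjoint_Ioc le_rfl) measurableSet_Ioc h₁ h₂]

lemma stdNormalPDF_eq_gaussianPDFReal : stdNormalPDF = gaussianPDFReal 0 1 := by
  ext x
  simp [stdNormalPDF, gaussianPDFReal]

lemma stdNormalPDF_neg (x : ℝ) : stdNormalPDF (-x) = stdNormalPDF x := by
  simp [stdNormalPDF]

lemma continuous_stdNormalPDF : Continuous stdNormalPDF := by
  unfold stdNormalPDF
  fun_prop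

lemma integrable_stdNormalPDF : Integrable stdNormalPDF :=
  stdNormalPDF_eq_gaussianPDFReal ▸ integrable_gaussianPDFReal 0 1

lemma integral_stdNormalPDF : ∫ x, stdNormalPDF x = 1 :=
  stdNormalPDF_eq_gaussianPDFReal ▸ integral_gaussianPDFReal_eq_one 0 one_ne_zero

lemma hasDerivAt_stdNormalPDF (x : ℝ) : HasDerivAt stdNormalPDF (-x * stdNormalPDF x) x := by
  have h : HasDerivAt (fun y : ℝ => -(y ^ 2) / 2) (-x) x :=
    ((hasDerivAt_pow 2 x).neg.div_const 2).congr_deriv (by ring)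
  exact (h.exp.const_mul (√(2 * π))⁻¹).congr_deriv (by simp only [stdNormalPDF]; ring)

lemma integrable_pow_mul_stdNormalPDF (n : ℕ) :
    Integrable (fun x => x ^ n * stdNormalPDF x) := by
  have h := (integrable_rpow_mul_exp_neg_mul_sq (b := 1 / 2) (by norm_num)
    (neg_one_lt_zero.trans_le n.cast_nonneg)).const_mul (√(2 * π))⁻¹
  refine h.congr (ae_of_all _ fun x => ?_)
  simp only [rpow_natCast, stdNormalPDF]
  ring_nf

lemma integrable_quadratic_mul_stdNormalPDF (p q r : ℝ) :
    Integrable (fun x => (p * x ^ 2 + q * x + r) * stdNormalPDF x) := by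
  have h := (((integrable_pow_mul_stdNormalPDF 2).const_mul p).add
    ((integrable_pow_mul_stdNormalPDF 1).const_mul q)).add
    ((integrable_pow_mul_stdNormalPDF 0).const_mul r)
  refine h.congr (ae_of_all _ fun x => ?_)
  simp only [Pi.add_apply]
  ring

lemma stdNormalCDF_eq_cdf : stdNormalCDF = cdf (gaussianReal 0 1) := by
  ext x
  rw [cdf_eq_real, measureReal_def, gaussianReal_apply_eq_integral _ one_ne_zero,
    ENNReal.toReal_ofReal (integral_nonneg (gaussianPDFReal_nonneg 0 1)),
    ← stdNormalPDF_eq_gaussianPDFReal, stdNormalCDF]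

lemma stdNormalCDF_sub_stdNormalCDF (a b : ℝ) :
    stdNormalCDF b - stdNormalCDF a = ∫ t in a..b, stdNormalPDF t :=
  intervalIntegral.integral_Iic_sub_Iic integrable_stdNormalPDF.integrableOn
    integrable_stdNormalPDF.integrableOn

lemma hasDerivAt_stdNormalCDF (x : ℝ) : HasDerivAt stdNormalCDF (stdNormalPDF x) x := by
  have h := (continuous_stdNormalPDF.integral_hasStrictDerivAt x x).hasDerivAt.const_add
    (stdNormalCDF x)
  refine h.congr_of_eventuallyEq (Eventually.of_forall fun y => ?_)
  simp only [← stdNormalCDF_sub_stdNormalCDF, add_sub_cancel]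

lemma stdNormalCDF_neg (x : ℝ) : stdNormalCDF (-x) = 1 - stdNormalCDF x := by
  rw [eq_sub_iff_add_eq, ← integral_stdNormalPDF,
    ← intervalIntegral.integral_Iic_add_Ioi integrable_stdNormalPDF.integrableOn
      integrable_stdNormalPDF.integrableOn (b := x), add_comm, stdNormalCDF, stdNormalCDF,
    ← integral_comp_neg_Ioi]
  simp only [stdNormalPDF_neg]

lemma tendsto_stdNormalCDF_atBot : Tendsto stdNormalCDF atBot (𝓝 0) :=
  stdNormalCDF_eq_cdf ▸ tendsto_cdf_atBot _

lemma integrable_sq_sub_mul_stdNormalPDF (c : ℝ) :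
    Integrable (fun z => (z - c) ^ 2 * stdNormalPDF z) :=
  (integrable_quadratic_mul_stdNormalPDF 1 (-2 * c) (c ^ 2)).congr
    (ae_of_all _ fun z => by ring)

lemma integral_Iic_sq_sub_mul_stdNormalPDF (c b : ℝ) :
    ∫ z in Iic b, (z - c) ^ 2 * stdNormalPDF z
      = (2 * c - b) * stdNormalPDF b + (1 + c ^ 2) * stdNormalCDF b := by
  set G : ℝ → ℝ := fun z => (2 * c - z) * stdNormalPDF z
  have hG : ∀ z,
      HasDerivAt G ((z - c) ^ 2 * stdNormalPDF z - (1 + c ^ 2) * stdNormalPDF z) z := fun z =>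
    (((hasDerivAt_id z).const_sub (2 * c)).mul (hasDerivAt_stdNormalPDF z)).congr_deriv
      (by simp only [id]; ring)
  have hG_atBot : Tendsto G atBot (𝓝 0) :=
    tendsto_zero_of_hasDerivAt_of_integrableOn_Iic (a := b) (fun z _ => hG z)
      ((integrable_sq_sub_mul_stdNormalPDF c).sub
        (integrable_stdNormalPDF.const_mul _)).integrableOn
      ((integrable_quadratic_mul_stdNormalPDF 0 (-1) (2 * c)).congr
        (ae_of_all _ fun z => by simp only [G]; ring)).integrableOn
  have hF : ∀ z ∈ Iic b, HasDerivAt (fun z => G z + (1 + c ^ 2) * stdNormalCDF z)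
      ((z - c) ^ 2 * stdNormalPDF z) z :=
    fun z _ => ((hG z).add ((hasDerivAt_stdNormalCDF z).const_mul _)).congr_deriv (by ring)
  have hF_atBot := hG_atBot.add (tendsto_stdNormalCDF_atBot.const_mul (1 + c ^ 2))
  rw [mul_zero, add_zero] at hF_atBot
  rw [integral_Iic_of_hasDerivAt_of_tendsto' hF
    (integrable_sq_sub_mul_stdNormalPDF c).integrableOn hF_atBot, sub_zero]

lemma integral_Ioi_sq_sub_mul_stdNormalPDF (c t : ℝ) :
    ∫ z in Ioi t, (z - c) ^ 2 * stdNormalPDF z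
      = (t - 2 * c) * stdNormalPDF t + (1 + c ^ 2) * stdNormalCDF (-t) := by
  rw [← neg_neg t, ← integral_comp_neg_Iic]
  simp only [neg_neg, stdNormalPDF_neg, integral_Iic_sq_sub_mul_stdNormalPDF,
    show ∀ z, (-z - c) ^ 2 = (z - -c) ^ 2 from fun z => by ring]
  ring

lemma integral_Ioc_stdNormalPDF {b t : ℝ} (h : b ≤ t) :
    ∫ z in Ioc b t, stdNormalPDF z = stdNormalCDF t - stdNormalCDF b := by
  rw [stdNormalCDF_sub_stdNormalCDF, intervalIntegral.integral_of_le h]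

lemma softThreshold_of_le_neg {x lam : ℝ} (hlam : 0 ≤ lam) (h : x ≤ -lam) :
    softThreshold x lam = x + lam := by
  obtain hx | rfl := (h.trans (neg_nonpos.2 hlam)).lt_or_eq
  · rw [softThreshold, sign_of_neg hx, abs_of_neg hx, max_eq_left (by linarith)]
    ring
  · obtain rfl : lam = 0 := by linarith
    simp [softThreshold]

lemma softThreshold_of_le {x lam : ℝ} (hlam : 0 ≤ lam) (h : lam ≤ x) :
    softThreshold x lam = x - lam := by
  obtain hx | rfl := (hlam.trans h).lt_or_eq'
  · rw [softThreshold, sign_of_pos hx, abs_of_pos hx, max_eq_left (by linarith), one_mul]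
  · obtain rfl : lam = 0 := by linarith
    simp [softThreshold]

lemma softThreshold_of_abs_le {x lam : ℝ} (h : |x| ≤ lam) : softThreshold x lam = 0 := by
  rw [softThreshold, max_eq_right (sub_nonpos.2 h), mul_zero]

noncomputable def softThresholdRiskClosedForm (μ a : ℝ) : ℝ :=
  (μ - a) * stdNormalPDF (a + μ) - (a + μ) * stdNormalPDF (a - μ)
    + (1 + a ^ 2 - μ ^ 2) * (stdNormalCDF (-a - μ) + stdNormalCDF (-a + μ)) + μ ^ 2

lemma integral_softThreshold_sub_sq_mul_stdNormalPDF (μ : ℝ) {a : ℝ} (ha : 0 ≤ a) :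
    ∫ z, (softThreshold (μ + z) a - μ) ^ 2 * stdNormalPDF z
      = softThresholdRiskClosedForm μ a := by
  set f : ℝ → ℝ := fun z => (softThreshold (μ + z) a - μ) ^ 2 * stdNormalPDF z
  have hbt : -a - μ ≤ a - μ := by linarith
  have h₁ : EqOn f (fun z => (z - -a) ^ 2 * stdNormalPDF z) (Iic (-a - μ)) := fun z hz => by
    simp only [f, softThreshold_of_le_neg ha (show μ + z ≤ -a by linarith [hz.out])]
    ring
  have h₂ : EqOn f (fun z => μ ^ 2 * stdNormalPDF z) (Ioc (-a - μ) (a - μ)) := fun z hz => by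
    simp only [f, softThreshold_of_abs_le
      (show |μ + z| ≤ a from abs_le.2 ⟨by linarith [hz.1], by linarith [hz.2]⟩)]
    ring
  have h₃ : EqOn f (fun z => (z - a) ^ 2 * stdNormalPDF z) (Ioi (a - μ)) := fun z hz => by
    simp only [f, softThreshold_of_le ha (show a ≤ μ + z by linarith [hz.out])]
    ring
  have hφ : stdNormalPDF (-a - μ) = stdNormalPDF (a + μ) := by
    rw [← stdNormalPDF_neg, neg_sub', neg_neg, sub_neg_eq_add]
  have hΦ : stdNormalCDF (a - μ) = 1 - stdNormalCDF (-a + μ) := by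
    rw [← stdNormalCDF_neg, neg_add, neg_neg, sub_eq_add_neg]
  rw [integral_eq_Iic_add_Ioc_add_Ioi hbt
      ((integrable_sq_sub_mul_stdNormalPDF _).integrableOn.congr_fun h₁.symm measurableSet_Iic)
      ((integrable_stdNormalPDF.const_mul _).integrableOn.congr_fun h₂.symm measurableSet_Ioc)
      ((integrable_sq_sub_mul_stdNormalPDF _).integrableOn.congr_fun h₃.symm measurableSet_Ioi),
    setIntegral_congr_fun measurableSet_Iic h₁, setIntegral_congr_fun measurableSet_Ioc h₂,
    setIntegral_congr_fun measurableSet_Ioi h₃, integral_Iic_sq_sub_mul_stdNormalPDF,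
    integral_const_mul, integral_Ioc_stdNormalPDF hbt, integral_Ioi_sq_sub_mul_stdNormalPDF,
    show -(a - μ) = -a + μ by ring, hφ, hΦ, softThresholdRiskClosedForm]
  ring

lemma hasDerivAt_softThresholdRiskClosedForm (μ a : ℝ) :
    HasDerivAt (softThresholdRiskClosedForm μ)
      (-2 * (stdNormalPDF (a + μ) + stdNormalPDF (a - μ))
        + 2 * a * (stdNormalCDF (-a - μ) + stdNormalCDF (-a + μ))) a := by
  have hφ₁ : HasDerivAt (fun x => stdNormalPDF (x + μ)) (-(a + μ) * stdNormalPDF (a + μ)) a :=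
    (hasDerivAt_stdNormalPDF (a + μ)).comp_add_const a μ
  have hφ₂ : HasDerivAt (fun x => stdNormalPDF (x - μ)) (-(a - μ) * stdNormalPDF (a - μ)) a :=
    (hasDerivAt_stdNormalPDF (a - μ)).comp_sub_const a μ
  have hΦ₁ : HasDerivAt (fun x => stdNormalCDF (-x - μ)) (-stdNormalPDF (a + μ)) a := by
    have h := (hasDerivAt_stdNormalCDF (-a - μ)).comp a ((hasDerivAt_neg a).sub_const μ)
    rwa [show -a - μ = -(a + μ) by ring, stdNormalPDF_neg, mul_neg_one] at h
  have hΦ₂ : HasDerivAt (fun x => stdNormalCDF (-x + μ)) (-stdNormalPDF (a - μ)) a := by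
    have h := (hasDerivAt_stdNormalCDF (-a + μ)).comp a ((hasDerivAt_neg a).add_const μ)
    rwa [show -a + μ = -(a - μ) by ring, stdNormalPDF_neg, mul_neg_one] at h
  have hsq : HasDerivAt (fun x => 1 + x ^ 2 - μ ^ 2) (2 * a) a := by
    simpa using ((hasDerivAt_pow 2 a).const_add 1).sub_const (μ ^ 2)
  have h := (((((hasDerivAt_id a).const_sub μ).mul hφ₁).sub
    (((hasDerivAt_id a).add_const μ).mul hφ₂)).add (hsq.mul (hΦ₁.add hΦ₂))).add_const (μ ^ 2)
  exact h.congr_deriv (by simp only [id, Pi.add_apply]; ring)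

theorem risk_deriv_in_alpha (μ : ℝ) (α : ℝ) (hα : 0 < α) :
    HasDerivAt
      (fun α : ℝ => ∫ z : ℝ, (softThreshold (μ + z) α - μ) ^ 2 * stdNormalPDF z)
      (-2 * (stdNormalPDF (α + μ) + stdNormalPDF (α - μ))
        + 2 * α * (stdNormalCDF (-α - μ) + stdNormalCDF (-α + μ))) α := by
  refine (hasDerivAt_softThresholdRiskClosedForm μ α).congr_of_eventuallyEq ?_
  filter_upwards [lt_mem_nhds hα] with a ha
  exact integral_softThreshold_sub_sq_mul_stdNormalPDF μ ha.le
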